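/- Fix α, β ∈ (0,1), positive reals a, b, μ, and θ ∈ (π/2, π/(1+α)). For every nonzero complex z with |arg z| < θ and every real λ ≥ 0, one has g(z) + λ ≠ 0 and |g(z)| / |g(z) + λ| ≤ 1 / sin(π − (1+α)θ), where g(z) = (z + a·z^{1+α}) / (μ·(1 + b·z^β)). -/

import Mathlib

/-! Write `z = r e^{it}` with `|t| < θ`. Multiplying numerator and denominator of `g(z)` by
`conj (1 + b z^β)` exhibits `g(z)` as a nonnegative combination of the `e^{ikt}` with
`0 ≤ k ≤ 1 + α`. These all lie in the convex cone of directions between `0` and `(1 + α) t`,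
whose opening is less than `π`; hence `|arg g(z)| ≤ φ := (1 + α) θ`, i.e. `cos φ |g| ≤ Re g`.
Then `|g + λ|² = |g|² + 2 λ Re g + λ² ≥ (λ + cos φ |g|)² + sin² φ |g|²`, so `|g + λ| ≥ sin φ |g|`,
and `sin φ > 0` because `0 < φ < π`. -/

/-- The symbol `g(z) = (z + a z^{1+α}) / (μ (1 + b z^β))` of the fractional
Oldroyd-B problem. Powers are principal complex powers. -/
noncomputable def oldroydSymbol (a b μ α β : ℝ) (z : ℂ) : ℂ :=
  (z + (a : ℂ) * z ^ ((1 + α : ℝ) : ℂ)) / ((μ : ℂ) * (1 + (b : ℂ) * z ^ ((β : ℝ) : ℂ)))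

open Complex Set
open scoped ComplexConjugate Real

/-- The closed cone of the directions between `0` and `ψ`: the points within angle `|ψ| / 2`
of the ray through `exp (ψ / 2 * I)`. It is convex for `|ψ| ≤ π`. -/
def arcCone (ψ : ℝ) : Set ℂ :=
  {w | Real.cos (ψ / 2) * ‖w‖ ≤ (w * exp ((-(ψ / 2) : ℝ) * I)).re}

lemma add_mem_arcCone {ψ : ℝ} {w₁ w₂ : ℂ} (hψ : |ψ| ≤ π) (h₁ : w₁ ∈ arcCone ψ)
    (h₂ : w₂ ∈ arcCone ψ) : w₁ + w₂ ∈ arcCone ψ := by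
  have hcos : 0 ≤ Real.cos (ψ / 2) :=
    Real.cos_nonneg_of_mem_Icc ⟨by linarith [neg_abs_le ψ], by linarith [le_abs_self ψ]⟩
  simp only [arcCone, mem_ofPred_eq, add_mul, add_re] at *
  calc Real.cos (ψ / 2) * ‖w₁ + w₂‖ ≤ Real.cos (ψ / 2) * (‖w₁‖ + ‖w₂‖) :=
        mul_le_mul_of_nonneg_left (norm_add_le _ _) hcos
    _ ≤ _ := by linarith

lemma ofReal_mul_mem_arcCone {ψ c : ℝ} {w : ℂ} (hc : 0 ≤ c) (hw : w ∈ arcCone ψ) :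
    (c : ℂ) * w ∈ arcCone ψ := by
  simp only [arcCone, mem_ofPred_eq, norm_mul, norm_real, Real.norm_of_nonneg hc, mul_assoc,
    re_ofReal_mul] at *
  rw [mul_left_comm]
  exact mul_le_mul_of_nonneg_left hw hc

lemma exp_mul_I_mem_arcCone {ψ s : ℝ} (hs : s ∈ uIcc 0 ψ) (hψ : |ψ| ≤ 2 * π) :
    exp (s * I) ∈ arcCone ψ := by
  have hdist : |s - ψ / 2| ≤ |ψ / 2| := by
    rcases mem_uIcc.mp hs with h | h <;> rw [abs_le] <;> cases abs_cases (ψ / 2) <;>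
      constructor <;> linarith
  simp only [arcCone, mem_ofPred_eq, norm_exp_ofReal_mul_I, mul_one, ← exp_add, ← add_mul,
    ← ofReal_add, exp_ofReal_mul_I_re, ← sub_eq_add_neg]
  rw [← Real.cos_abs (ψ / 2), ← Real.cos_abs (s - ψ / 2)]
  exact Real.cos_le_cos_of_nonneg_of_le_pi (abs_nonneg _)
    (by rw [abs_div]; norm_num; linarith) hdist

lemma ofReal_mul_exp_mem_arcCone {c k K t : ℝ} (hc : 0 ≤ c) (hk : k ∈ Icc 0 K)
    (hKt : |K * t| ≤ 2 * π) : (c : ℂ) * exp ((k * t : ℝ) * I) ∈ arcCone (K * t) := by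
  have hkt : k * t ∈ uIcc 0 (K * t) := by
    rw [← zero_mul t, ← image_mul_const_uIcc]
    exact mem_image_of_mem (· * t) (Icc_subset_uIcc hk)
  exact ofReal_mul_mem_arcCone hc (exp_mul_I_mem_arcCone hkt hKt)

lemma add_ne_zero_of_mem_arcCone {ψ : ℝ} {w₁ w₂ : ℂ} (hψ : |ψ| < π) (h₁ : w₁ ∈ arcCone ψ)
    (h₂ : w₂ ∈ arcCone ψ) (hw₁ : w₁ ≠ 0) : w₁ + w₂ ≠ 0 := by
  have hcos : 0 < Real.cos (ψ / 2) :=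
    Real.cos_pos_of_mem_Ioo ⟨by linarith [neg_abs_le ψ], by linarith [le_abs_self ψ]⟩
  have hnorm₁ : 0 < Real.cos (ψ / 2) * ‖w₁‖ := mul_pos hcos (norm_pos_iff.mpr hw₁)
  have hnorm₂ : 0 ≤ Real.cos (ψ / 2) * ‖w₂‖ := mul_nonneg hcos.le (norm_nonneg _)
  intro h
  have hre : (w₁ * exp ((-(ψ / 2) : ℝ) * I)).re + (w₂ * exp ((-(ψ / 2) : ℝ) * I)).re = 0 := by
    rw [← add_re, ← add_mul, h, zero_mul, zero_re]
  simp only [arcCone, mem_ofPred_eq] at h₁ h₂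
  linarith

lemma cos_mul_norm_le_re_of_mem_arcCone {ψ φ : ℝ} {w : ℂ} (hψφ : |ψ| ≤ φ) (hφ : φ ≤ π)
    (hw : w ∈ arcCone ψ) : Real.cos φ * ‖w‖ ≤ w.re := by
  set v := w * exp ((-(ψ / 2) : ℝ) * I) with hv
  set c := Real.cos (ψ / 2)
  set s := Real.sin (ψ / 2)
  have hc : 0 ≤ c :=
    Real.cos_nonneg_of_mem_Icc ⟨by linarith [neg_abs_le ψ], by linarith [le_abs_self ψ]⟩
  have hv_re : c * ‖w‖ ≤ v.re := hw
  have hw_re : w.re = v.re * c - v.im * s := by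
    have : w = v * exp ((ψ / 2 : ℝ) * I) := by
      rw [hv, mul_assoc, ← exp_add, ← add_mul, ← ofReal_add, neg_add_cancel, ofReal_zero,
        zero_mul, exp_zero, mul_one]
    rw [this, mul_re, exp_ofReal_mul_I_re, exp_ofReal_mul_I_im]
  have hv_im : |v.im| ≤ |s| * ‖w‖ := by
    have hvw : ‖v‖ = ‖w‖ := by rw [hv, norm_mul, norm_exp_ofReal_mul_I, mul_one]
    have hpyth : v.re ^ 2 + v.im ^ 2 = ‖w‖ ^ 2 := by
      rw [← hvw, Complex.sq_norm, normSq_apply]; ring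
    have hcs := Real.cos_sq_add_sin_sq (ψ / 2)
    have hcw : 0 ≤ c * ‖w‖ := mul_nonneg hc (norm_nonneg _)
    rw [← abs_norm, ← abs_mul]
    apply sq_le_sq.mp
    nlinarith [mul_le_mul hv_re hv_re hcw (hcw.trans hv_re)]
  have hcos_ψ : Real.cos φ ≤ c ^ 2 - s ^ 2 := by
    rw [← Real.cos_two_mul', mul_div_cancel₀ _ two_ne_zero, ← Real.cos_abs ψ]
    exact Real.cos_le_cos_of_nonneg_of_le_pi (abs_nonneg _) hφ hψφ
  have him_s : v.im * s ≤ s ^ 2 * ‖w‖ := by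
    calc v.im * s ≤ |v.im| * |s| := by rw [← abs_mul]; exact le_abs_self _
      _ ≤ |s| * ‖w‖ * |s| := mul_le_mul_of_nonneg_right hv_im (abs_nonneg _)
      _ = s ^ 2 * ‖w‖ := by rw [mul_right_comm, ← sq, sq_abs]
  calc Real.cos φ * ‖w‖ ≤ (c ^ 2 - s ^ 2) * ‖w‖ :=
        mul_le_mul_of_nonneg_right hcos_ψ (norm_nonneg _)
    _ ≤ w.re := by rw [hw_re]; nlinarith

lemma sin_mul_norm_le_norm_add_ofReal {w : ℂ} {φ l : ℝ} (hw : Real.cos φ * ‖w‖ ≤ w.re)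
    (hφ : 0 ≤ Real.sin φ) (hl : 0 ≤ l) : Real.sin φ * ‖w‖ ≤ ‖w + l‖ := by
  have hsq : (Real.sin φ * ‖w‖) ^ 2 ≤ ‖w + l‖ ^ 2 := by
    have hexpand : ‖w + l‖ ^ 2 = ‖w‖ ^ 2 + 2 * l * w.re + l ^ 2 := by
      simp only [Complex.sq_norm, normSq_apply, add_re, add_im, ofReal_re, ofReal_im]; ring
    have hpyth := Real.sin_sq_add_cos_sq φ
    nlinarith [sq_nonneg (l + Real.cos φ * ‖w‖), mul_le_mul_of_nonneg_left hw hl]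
  exact (sq_le_sq₀ (by positivity) (norm_nonneg _)).mp hsq

lemma cpow_ofReal_eq_mul_exp (z : ℂ) (s : ℝ) :
    z ^ (s : ℂ) = ((‖z‖ ^ s : ℝ) : ℂ) * exp ((s * arg z : ℝ) * I) := by
  rw [cpow_ofReal, exp_mul_I, mul_comm s]
  push_cast
  rfl

lemma conj_exp_ofReal_mul_I (x : ℝ) : conj (exp (x * I)) = exp ((-x : ℝ) * I) := by
  rw [← exp_conj, map_mul, conj_ofReal, conj_I, ofReal_neg, neg_mul, mul_neg]

lemma self_add_mul_cpow_eq_polar (a α : ℝ) (z : ℂ) :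
    z + a * z ^ ((1 + α : ℝ) : ℂ)
      = (‖z‖ : ℂ) * exp (arg z * I)
        + ((a * ‖z‖ ^ (1 + α) : ℝ) : ℂ) * exp (((1 + α) * arg z : ℝ) * I) := by
  rw [cpow_ofReal_eq_mul_exp]
  nth_rw 1 [← norm_mul_exp_arg_mul_I z]
  push_cast
  ring

lemma one_add_mul_cpow_eq_polar (b β : ℝ) (z : ℂ) :
    1 + b * z ^ (β : ℂ) = 1 + ((b * ‖z‖ ^ β : ℝ) : ℂ) * exp ((β * arg z : ℝ) * I) := by
  rw [cpow_ofReal_eq_mul_exp]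
  push_cast
  ring

lemma oldroydSymbol_eq_ofReal_mul_mul_conj (a b μ α β : ℝ) (z : ℂ) :
    oldroydSymbol a b μ α β z = ((μ / normSq (μ * (1 + b * z ^ (β : ℂ))) : ℝ) : ℂ)
      * ((z + a * z ^ ((1 + α : ℝ) : ℂ)) * conj (1 + b * z ^ (β : ℂ))) := by
  rw [oldroydSymbol, div_eq_mul_inv, inv_def, map_mul, conj_ofReal]
  push_cast
  ring

lemma oldroydSymbol_mem_arcCone {a b μ α β : ℝ} (z : ℂ) (ha : 0 ≤ a) (hb : 0 ≤ b) (hμ : 0 ≤ μ)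
    (hα : 0 ≤ α) (hβ : β ∈ Icc 0 1) (hψ : |(1 + α) * arg z| ≤ π) :
    oldroydSymbol a b μ α β z ∈ arcCone ((1 + α) * arg z) := by
  set r := ‖z‖
  set t := arg z
  have hterm {c k : ℝ} (hc : 0 ≤ c) (hk : k ∈ Icc 0 (1 + α)) :
      (c : ℂ) * exp ((k * t : ℝ) * I) ∈ arcCone ((1 + α) * t) :=
    ofReal_mul_exp_mem_arcCone hc hk (by linarith [Real.pi_pos])
  have hprod : (z + a * z ^ ((1 + α : ℝ) : ℂ)) * conj (1 + b * z ^ (β : ℂ))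
      = (r : ℂ) * exp ((1 * t : ℝ) * I)
        + ((a * r ^ (1 + α) : ℝ) : ℂ) * exp (((1 + α) * t : ℝ) * I)
        + ((r * (b * r ^ β)) : ℝ) * exp (((1 - β) * t : ℝ) * I)
        + ((a * r ^ (1 + α) * (b * r ^ β)) : ℝ) * exp (((1 + α - β) * t : ℝ) * I) := by
    rw [self_add_mul_cpow_eq_polar, one_add_mul_cpow_eq_polar, map_add, map_one, map_mul,
      conj_ofReal, conj_exp_ofReal_mul_I,
      show ((1 - β) * t : ℝ) = 1 * t + -(β * t) by ring,
      show ((1 + α - β) * t : ℝ) = (1 + α) * t + -(β * t) by ring]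
    simp only [ofReal_add, add_mul, exp_add, one_mul]
    push_cast
    ring
  rw [oldroydSymbol_eq_ofReal_mul_mul_conj, hprod]
  refine ofReal_mul_mem_arcCone (div_nonneg hμ (normSq_nonneg _))
    (add_mem_arcCone hψ (add_mem_arcCone hψ (add_mem_arcCone hψ ?_ ?_) ?_) ?_) <;>
    exact hterm (by positivity) ⟨by linarith [hβ.1, hβ.2], by linarith [hβ.1, hβ.2]⟩

lemma oldroydSymbol_ne_zero {a b μ α β : ℝ} {z : ℂ} (hz : z ≠ 0) (ha : 0 ≤ a) (hb : 0 ≤ b)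
    (hμ : μ ≠ 0) (hα : 0 ≤ α) (hβ : β ∈ Icc 0 1) (hψ : |(1 + α) * arg z| < π) :
    oldroydSymbol a b μ α β z ≠ 0 := by
  have hterm {c k : ℝ} (hc : 0 ≤ c) (hk : k ∈ Icc 0 (1 + α)) :
      (c : ℂ) * exp ((k * arg z : ℝ) * I) ∈ arcCone ((1 + α) * arg z) :=
    ofReal_mul_exp_mem_arcCone hc hk (by linarith [Real.pi_pos])
  have hK : 1 ∈ Icc 0 (1 + α) := ⟨zero_le_one, by linarith⟩
  have hnum : z + a * z ^ ((1 + α : ℝ) : ℂ) ≠ 0 := by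
    rw [self_add_mul_cpow_eq_polar]
    exact add_ne_zero_of_mem_arcCone hψ (by simpa using hterm (norm_nonneg z) hK)
      (hterm (by positivity) ⟨by linarith, le_rfl⟩) (by simp [hz])
  have hden : 1 + b * z ^ (β : ℂ) ≠ 0 := by
    rw [one_add_mul_cpow_eq_polar]
    exact add_ne_zero_of_mem_arcCone hψ (by simpa using hterm zero_le_one ⟨le_rfl, by linarith⟩)
      (hterm (by positivity) ⟨hβ.1, by linarith [hβ.2]⟩) one_ne_zero
  exact div_ne_zero hnum (mul_ne_zero (ofReal_ne_zero.mpr hμ) hden)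

theorem oldroydSymbol_resolvent_bound (α β a b μ θ : ℝ)
    (hα : α ∈ Set.Ioo (0 : ℝ) 1) (hβ : β ∈ Set.Ioo (0 : ℝ) 1)
    (ha : 0 < a) (hb : 0 < b) (hμ : 0 < μ)
    (hθ' : θ < Real.pi / (1 + α))
    (z : ℂ) (hz : z ≠ 0) (hargz : |Complex.arg z| < θ)
    (lam : ℝ) (hlam : 0 ≤ lam) :
    oldroydSymbol a b μ α β z + (lam : ℂ) ≠ 0 ∧
    ‖oldroydSymbol a b μ α β z‖ /
        ‖oldroydSymbol a b μ α β z + (lam : ℂ)‖ ≤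
      1 / Real.sin (Real.pi - (1 + α) * θ) := by
  set g := oldroydSymbol a b μ α β z
  have hK : 0 < 1 + α := by linarith [hα.1]
  have hψφ : |(1 + α) * arg z| ≤ (1 + α) * θ := by
    rw [abs_mul, abs_of_pos hK]
    exact mul_le_mul_of_nonneg_left hargz.le hK.le
  have hφ : (1 + α) * θ < π := (lt_div_iff₀' hK).mp hθ'
  have hsin : 0 < Real.sin ((1 + α) * θ) :=
    Real.sin_pos_of_pos_of_lt_pi (mul_pos hK (by linarith [abs_nonneg (arg z)])) hφ
  have hg : g ≠ 0 := oldroydSymbol_ne_zero hz ha.le hb.le hμ.ne' hα.1.le (Ioo_subset_Icc_self hβ)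
    (hψφ.trans_lt hφ)
  have hsector : Real.cos ((1 + α) * θ) * ‖g‖ ≤ g.re :=
    cos_mul_norm_le_re_of_mem_arcCone hψφ hφ.le
      (oldroydSymbol_mem_arcCone z ha.le hb.le hμ.le hα.1.le (Ioo_subset_Icc_self hβ)
        (hψφ.trans hφ.le))
  have hbound : Real.sin ((1 + α) * θ) * ‖g‖ ≤ ‖g + lam‖ :=
    sin_mul_norm_le_norm_add_ofReal hsector hsin.le hlam
  have hpos : 0 < ‖g + lam‖ := (mul_pos hsin (norm_pos_iff.mpr hg)).trans_le hbound
  refine ⟨norm_pos_iff.mp hpos, ?_⟩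
  rw [Real.sin_pi_sub, div_le_div_iff₀ hpos hsin, one_mul, mul_comm]
  exact hbound
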